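/- Let K be a field and ν a valuation on K[x] with trivial support, extended to K(x). If Λ is a complete sequence of key polynomials for ν having a last element Q, then ν = ν_Q, and consequently ν is valuation-transcendental. -/

import Mathlib

/-!
For a key polynomial `Q`, the truncation `ν_Q(f)` equals `min_t (ν(∂_t f) + t ε(Q))`. This minimum
is multiplicative (a Gauss lemma), and the term `fᵢ Qⁱ` of the `Q`-expansion of `f` attains it last
at `t = i b`, where `b ≥ 1` is the last index realising `ε(Q)`; so distinct terms cannot cancel.
Consequently `ν_Q(f) = ν(f)` exactly when `ε(f) ≤ ε(Q)`. If `Q` is the last element of a complete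
sequence, every `f` has `ε(f) ≤ ε(Q') ≤ ε(Q)` for some `Q'` with `ν_{Q'}(f) = ν(f)`, so `ν = ν_Q`.
Then either no power of `Q` has its value in `νK`, and `ν` is value-transcendental, or
`ν(Qⁿ) = ν(c)` and the residue of `Qⁿ / c` is transcendental.
-/

open Polynomial

section KeyPolyDefs

variable {K : Type*} [Field K] {Γ : Type*} [AddCommGroup Γ] [LinearOrder Γ] [IsOrderedAddMonoid Γ]

/-- The value `ν f` read in `Γ` (junk value `0` when `ν f = ⊤`). -/
noncomputable def aval (ν : AddValuation (Polynomial K) (WithTop Γ)) (f : Polynomial K) : Γ :=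
  (ν f).untopD 0

/-- `ν` has trivial support: only `0` has value `⊤`. -/
def TrivialSupport (ν : AddValuation (Polynomial K) (WithTop Γ)) : Prop :=
  ∀ f : Polynomial K, ν f = ⊤ → f = 0

/-- The set of indices `r`, `1 ≤ r ≤ deg f` with `∂_r f ≠ 0`, over which `ε(f)` is computed. -/
noncomputable def epsSupport (f : Polynomial K) : Finset ℕ :=
  @Finset.filter _ (fun r => f.hasseDeriv r ≠ 0) (Classical.decPred _) (Finset.Icc 1 f.natDegree)

/-- `ε(f) = max_{r ≥ 1} (ν f - ν ∂_r f) / r`, computed in the divisible group `Γ`. -/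
noncomputable def eps [Module ℚ Γ] (ν : AddValuation (Polynomial K) (WithTop Γ))
    (f : Polynomial K) : Γ :=
  if h : (epsSupport f).Nonempty then
    (epsSupport f).sup' h fun r => ((r : ℚ)⁻¹) • (aval ν f - aval ν (f.hasseDeriv r))
  else 0

/-- `Q` is a key polynomial for `ν`: `Q` is monic and every `f` with `ε(f) ≥ ε(Q)` satisfies
`deg f ≥ deg Q`. -/
def IsKeyPoly [Module ℚ Γ] (ν : AddValuation (Polynomial K) (WithTop Γ))
    (Q : Polynomial K) : Prop :=
  Q.Monic ∧ 0 < Q.natDegree ∧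
    ∀ f : Polynomial K, 0 < f.natDegree → eps ν Q ≤ eps ν f → Q.natDegree ≤ f.natDegree

/-- The `i`-th coefficient of the `q`-expansion of a polynomial. -/
noncomputable def qCoeff (q : Polynomial K) : ℕ → Polynomial K → Polynomial K
  | 0, p => p % q
  | n + 1, p => qCoeff q n (p / q)

/-- The `q`-truncation `ν_q` of `ν`:  `ν_q(p) = min_i ν(p_i q^i)` where `p = Σ p_i q^i`
is the `q`-expansion of `p`. -/
noncomputable def trunc (ν : AddValuation (Polynomial K) (WithTop Γ)) (q p : Polynomial K) :
    WithTop Γ :=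
  (Finset.range (p.natDegree + 1)).inf fun i => ν (qCoeff q i p * q ^ i)

variable {L : Type*} [Field L] [Algebra K L]

/-- `δ(f)`: the maximal value `μ(x - a)` over the roots `a` of `f` in `L`
(junk value `0` if `f` has no roots in `L`). -/
noncomputable def delta (μ : AddValuation (Polynomial L) (WithTop Γ)) (f : Polynomial K) : Γ :=
  letI := Classical.decEq L
  if h : ((f.map (algebraMap K L)).roots.toFinset).Nonempty then
    ((f.map (algebraMap K L)).roots.toFinset).sup' h fun a => aval μ (X - C a)
  else 0

/-- `μ` on `L[x]` extends `ν` on `K[x]`. -/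
def IsExtension (μ : AddValuation (Polynomial L) (WithTop Γ))
    (ν : AddValuation (Polynomial K) (WithTop Γ)) : Prop :=
  ∀ f : Polynomial K, μ (f.map (algebraMap K L)) = ν f

/-- `w` on `K(x)` extends `ν` on `K[x]`. -/
def ExtendsToRatFunc (w : AddValuation (RatFunc K) (WithTop Γ))
    (ν : AddValuation (Polynomial K) (WithTop Γ)) : Prop :=
  ∀ p : Polynomial K, w (algebraMap (Polynomial K) (RatFunc K) p) = ν p

/-- The residue of `f` is transcendental over the residue field `Kν`:  every polynomial with
coefficients in the valuation ring of `K`, at least one of which is a unit, keeps value `0`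
when evaluated at `f`. -/
def ResidueTranscendentalElem (w : AddValuation (RatFunc K) (WithTop Γ)) (f : RatFunc K) : Prop :=
  ∀ (n : ℕ) (c : ℕ → K),
    (∀ i ≤ n, 0 ≤ w (algebraMap K (RatFunc K) (c i))) →
    (∃ i ≤ n, w (algebraMap K (RatFunc K) (c i)) = 0) →
    w (∑ i ∈ Finset.range (n + 1), algebraMap K (RatFunc K) (c i) * f ^ i) = 0

/-- The residue of `g` is algebraic over the residue field `Kν`: some polynomial with
coefficients in the valuation ring of `K`, at least one of which is a unit, gets positive
value when evaluated at `g`. -/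
def ResidueAlgebraicElem (w : AddValuation (RatFunc K) (WithTop Γ)) (g : RatFunc K) : Prop :=
  ∃ (n : ℕ) (c : ℕ → K),
    (∀ i ≤ n, 0 ≤ w (algebraMap K (RatFunc K) (c i))) ∧
    (∃ i ≤ n, w (algebraMap K (RatFunc K) (c i)) = 0) ∧
    0 < w (∑ i ∈ Finset.range (n + 1), algebraMap K (RatFunc K) (c i) * g ^ i)

/-- `w` is residue-transcendental: some `f` with `w f = 0` has transcendental residue. -/
def IsResidueTranscendental (w : AddValuation (RatFunc K) (WithTop Γ)) : Prop :=
  ∃ f : RatFunc K, w f = 0 ∧ ResidueTranscendentalElem w f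

/-- `w` is value-transcendental: some value `w f` is torsion-free over the value group
`νK` of `K`, i.e. `n ν(f) ∉ νK` for every `n ≥ 1`. -/
def IsValueTranscendental (w : AddValuation (RatFunc K) (WithTop Γ)) : Prop :=
  ∃ f : RatFunc K, f ≠ 0 ∧
    ∀ n : ℕ, 0 < n → ∀ c : K, c ≠ 0 → w (f ^ n) ≠ w (algebraMap K (RatFunc K) c)

/-- `w` is valuation-transcendental: it is value-transcendental or residue-transcendental. -/
def IsValuationTranscendental (w : AddValuation (RatFunc K) (WithTop Γ)) : Prop :=
  IsValueTranscendental w ∨ IsResidueTranscendental w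

end KeyPolyDefs

section MinimalPairDefs

variable {Γ : Type*} [AddCommGroup Γ] [LinearOrder Γ] [IsOrderedAddMonoid Γ] {L : Type*} [Field L]

/-- `(a, d)` is a minimal pair for the valuation (w.r.t. the extension `μ` to `L[x]`):
every `b` with `μ(b - a) ≥ d` satisfies `[K(b) : K] ≥ [K(a) : K]`. -/
def IsMinimalPair (K : Type*) [Field K] [Algebra K L]
    (μ : AddValuation (Polynomial L) (WithTop Γ)) (a : L) (d : Γ) : Prop :=
  ∀ b : L, (d : WithTop Γ) ≤ μ (C (b - a)) →
    (minpoly K a).natDegree ≤ (minpoly K b).natDegree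

/-- `(a, d)` is a minimal pair of definition: a minimal pair with `μ(x - a) = d ≥ μ(x - b)`
for every `b ∈ L`. -/
def IsMinimalPairOfDefinition (K : Type*) [Field K] [Algebra K L]
    (μ : AddValuation (Polynomial L) (WithTop Γ)) (a : L) (d : Γ) : Prop :=
  IsMinimalPair K μ a d ∧ μ (X - C a) = (d : WithTop Γ) ∧
    ∀ b : L, μ (X - C b) ≤ (d : WithTop Γ)

end MinimalPairDefs

/-- `OrderedSMul` as it stood in Mathlib (removed since): strict monotonicity and strict
reflection of `<` under scalar multiplication by positive elements. -/
class OrderedSMul (R M : Type*) [Semiring R] [PartialOrder R] [AddCommMonoid M] [PartialOrder M]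
    [SMulWithZero R M] : Prop where
  smul_lt_smul_of_pos : ∀ {a b : M}, ∀ {c : R}, a < b → 0 < c → c • a < c • b
  lt_of_smul_lt_smul_of_pos : ∀ {a b : M}, ∀ {c : R}, c • a < c • b → 0 < c → a < b

section QExpansion

variable {K : Type*} [Field K] {Q : K[X]}

theorem qCoeff_zero_eq_modByMonic (hQ : Q.Monic) (p : K[X]) : qCoeff Q 0 p = p %ₘ Q := by
  rw [qCoeff, modByMonic_eq_mod p hQ]

theorem qCoeff_succ_eq (hQ : Q.Monic) (n : ℕ) (p : K[X]) :
    qCoeff Q (n + 1) p = qCoeff Q n (p /ₘ Q) := by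
  rw [qCoeff, divByMonic_eq_div p hQ]

theorem qCoeff_zero_right (hQ : Q.Monic) (n : ℕ) : qCoeff Q n 0 = 0 := by
  induction n with
  | zero => rw [qCoeff_zero_eq_modByMonic hQ, zero_modByMonic]
  | succ n ih => rw [qCoeff_succ_eq hQ, zero_divByMonic, ih]

theorem degree_qCoeff_lt (hQ : Q.Monic) (n : ℕ) (p : K[X]) :
    (qCoeff Q n p).degree < Q.degree := by
  induction n generalizing p with
  | zero => rw [qCoeff_zero_eq_modByMonic hQ]; exact degree_modByMonic_lt p hQ
  | succ n ih => rw [qCoeff_succ_eq hQ]; exact ih _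

theorem qCoeff_eq_zero_of_natDegree_lt (hQ : Q.Monic) (hQd : 0 < Q.natDegree) {n : ℕ} {p : K[X]}
    (hp : p.natDegree < n) : qCoeff Q n p = 0 := by
  induction n generalizing p with
  | zero => omega
  | succ n ih =>
    rw [qCoeff_succ_eq hQ]
    by_cases hdiv : p /ₘ Q = 0
    · rw [hdiv, qCoeff_zero_right hQ]
    · have hQp : Q.natDegree ≤ p.natDegree :=
        natDegree_le_natDegree (not_lt.1 ((divByMonic_eq_zero_iff hQ).not.1 hdiv))
      exact ih (by rw [natDegree_divByMonic p hQ]; omega)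

theorem sum_qCoeff_mul_pow (hQ : Q.Monic) (hQd : 0 < Q.natDegree) {p : K[X]} {N : ℕ}
    (hN : p.natDegree ≤ N) : ∑ i ∈ Finset.range (N + 1), qCoeff Q i p * Q ^ i = p := by
  induction N generalizing p with
  | zero =>
    rw [Finset.sum_range_one, pow_zero, mul_one, qCoeff_zero_eq_modByMonic hQ,
      modByMonic_eq_self_iff hQ]
    exact degree_lt_degree (by omega)
  | succ N ih =>
    conv_rhs => rw [← modByMonic_add_div p Q, ← ih (p := p /ₘ Q) (by
      rw [natDegree_divByMonic p hQ]; omega)]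
    rw [Finset.sum_range_succ', pow_zero, mul_one, qCoeff_zero_eq_modByMonic hQ, add_comm,
      Finset.mul_sum]
    congr 1
    refine Finset.sum_congr rfl fun i _ => ?_
    rw [qCoeff_succ_eq hQ, pow_succ]
    ring

theorem qCoeff_eval (hQ : Q.Monic) {E : K[X][X]} (hE : ∀ j, (E.coeff j).degree < Q.degree)
    (k : ℕ) : qCoeff Q k (E.eval Q) = E.coeff k := by
  have hdiv : ∀ E : K[X][X], (∀ j, (E.coeff j).degree < Q.degree) →
      E.eval Q /ₘ Q = E.divX.eval Q ∧ E.eval Q %ₘ Q = E.coeff 0 := by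
    intro E hE
    refine div_modByMonic_unique _ _ hQ ⟨?_, hE 0⟩
    conv_rhs => rw [← divX_mul_X_add E]
    simp only [eval_add, eval_mul, eval_X, eval_C]
    ring
  induction k generalizing E with
  | zero => rw [qCoeff_zero_eq_modByMonic hQ, (hdiv E hE).2]
  | succ k ih =>
    rw [qCoeff_succ_eq hQ, (hdiv E hE).1, ih (fun j => by rw [coeff_divX]; exact hE _), coeff_divX]

end QExpansion

section Truncation

variable {K : Type*} [Field K] {Γ : Type*} [AddCommGroup Γ] [LinearOrder Γ]
  [IsOrderedAddMonoid Γ] (ν : AddValuation K[X] (WithTop Γ)) {Q : K[X]}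

theorem trunc_le_map_qCoeff_mul_pow (hQ : Q.Monic) (hQd : 0 < Q.natDegree) (p : K[X]) (k : ℕ) :
    trunc ν Q p ≤ ν (qCoeff Q k p * Q ^ k) := by
  rcases le_or_gt k p.natDegree with hk | hk
  · exact Finset.inf_le (Finset.mem_range.2 (by omega))
  · rw [qCoeff_eq_zero_of_natDegree_lt hQ hQd hk, zero_mul, ν.map_zero]
    exact le_top

theorem trunc_of_degree_lt (hQ : Q.Monic) {p : K[X]} (hp : p.degree < Q.degree) :
    trunc ν Q p = ν p := by
  have hterm : ∀ i, qCoeff Q i p * Q ^ i = if i = 0 then p else 0 := by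
    rintro (_ | i)
    · rw [qCoeff_zero_eq_modByMonic hQ, (modByMonic_eq_self_iff hQ).2 hp, pow_zero, mul_one,
        if_pos rfl]
    · rw [qCoeff_succ_eq hQ, (divByMonic_eq_zero_iff hQ).2 hp, qCoeff_zero_right hQ, zero_mul,
        if_neg (Nat.succ_ne_zero i)]
  refine le_antisymm ?_ (Finset.le_inf fun i _ => ?_)
  · calc trunc ν Q p ≤ ν (qCoeff Q 0 p * Q ^ 0) :=
          Finset.inf_le (Finset.mem_range.2 p.natDegree.succ_pos)
      _ = ν p := by rw [hterm, if_pos rfl]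
  · rw [hterm]
    split_ifs
    · exact le_rfl
    · rw [ν.map_zero]
      exact le_top

end Truncation


namespace AddValuation

variable {R Γ₀ ι : Type*} [Ring R] [LinearOrderedAddCommMonoidWithTop Γ₀]
  (v : AddValuation R Γ₀)
  {s : Finset ι} {f : ι → R}

theorem exists_map_le_map_sum (hs : s.Nonempty) :
    ∃ i ∈ s, v (f i) ≤ v (∑ i ∈ s, f i) := by
  obtain ⟨j, hj, hmin⟩ := s.exists_min_image (fun i => v (f i)) hs
  exact ⟨j, hj, v.map_le_sum hmin⟩

theorem map_sum_eq_of_forall_lt [DecidableEq ι] {j : ι} (hj : j ∈ s)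
    (h : ∀ i ∈ s, i ≠ j → v (f j) < v (f i)) : v (∑ i ∈ s, f i) = v (f j) := by
  rw [← Finset.add_sum_erase s f hj]
  rcases (s.erase j).eq_empty_or_nonempty with he | ⟨i, hi⟩
  · rw [he, Finset.sum_empty, add_zero]
  · have hlt : ∀ i ∈ s.erase j, v (f j) < v (f i) := fun i hi =>
      h i (Finset.mem_of_mem_erase hi) (Finset.ne_of_mem_erase hi)
    exact v.map_add_eq_of_lt_left (v.map_lt_sum' ((hlt i hi).trans_le le_top) hlt)

theorem le_map_sum_add {a c : Γ₀} (h : ∀ i ∈ s, a ≤ v (f i) + c) :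
    a ≤ v (∑ i ∈ s, f i) + c := by
  rcases s.eq_empty_or_nonempty with rfl | hs
  · simp
  obtain ⟨j, hj, hle⟩ := v.exists_map_le_map_sum (f := f) hs
  exact (h j hj).trans (add_le_add_left hle c)

theorem lt_map_sum_add (hs : s.Nonempty) {a c : Γ₀} (h : ∀ i ∈ s, a < v (f i) + c) :
    a < v (∑ i ∈ s, f i) + c := by
  obtain ⟨j, hj, hle⟩ := v.exists_map_le_map_sum (f := f) hs
  exact (h j hj).trans_le (add_le_add_left hle c)

end AddValuation

section HasseValue

open Finset.HasAntidiagonal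

variable {R : Type*} [CommRing R] {Γ : Type*} [AddCommGroup Γ] [LinearOrder Γ]
  [IsOrderedAddMonoid Γ] (ν : AddValuation R[X] (WithTop Γ)) (e : Γ)

/-- Minimised over `t`, this is the graded valuation of slope `e`; for `e = ε(Q)` it is the
truncation `ν_Q`. -/
noncomputable def hasseVal (g : R[X]) (t : ℕ) : WithTop Γ :=
  ν (hasseDeriv t g) + ((t • e : Γ) : WithTop Γ)

structure IsLastHasseMin (g : R[X]) (m : WithTop Γ) (r : ℕ) : Prop where
  le : ∀ t, m ≤ hasseVal ν e g t
  eq : hasseVal ν e g r = m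
  lt : ∀ t, r < t → m < hasseVal ν e g t

variable {ν e}

@[simp]
theorem hasseVal_zero_right (g : R[X]) : hasseVal ν e g 0 = ν g := by
  simp [hasseVal]

theorem hasseVal_of_natDegree_lt {g : R[X]} {t : ℕ} (ht : g.natDegree < t) :
    hasseVal ν e g t = ⊤ := by
  rw [hasseVal, hasseDeriv_eq_zero_of_lt_natDegree g t ht, ν.map_zero, top_add]

theorem hasseVal_sum {ι : Type*} (s : Finset ι) (g : ι → R[X]) (t : ℕ) :
    hasseVal ν e (∑ i ∈ s, g i) t =
      ν (∑ i ∈ s, hasseDeriv t (g i)) + ((t • e : Γ) : WithTop Γ) := by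
  rw [hasseVal, map_sum]

theorem hasseVal_mul (g h : R[X]) (s : ℕ) :
    hasseVal ν e (g * h) s =
      ν (∑ p ∈ antidiagonal s, hasseDeriv p.1 g * hasseDeriv p.2 h) +
        ((s • e : Γ) : WithTop Γ) := by
  rw [hasseVal, hasseDeriv_mul]

theorem map_hasseDeriv_mul_add {g h : R[X]} {s : ℕ} {p : ℕ × ℕ} (hp : p ∈ antidiagonal s) :
    ν (hasseDeriv p.1 g * hasseDeriv p.2 h) + ((s • e : Γ) : WithTop Γ) =
      hasseVal ν e g p.1 + hasseVal ν e h p.2 := by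
  rw [← mem_antidiagonal.1 hp, add_nsmul, WithTop.coe_add, ν.map_mul, hasseVal, hasseVal]
  abel

theorem hasseVal_strictMono {g : R[X]} {r : ℕ} (hr : r ≠ 0) (hd : ν (hasseDeriv r g) ≠ ⊤) :
    StrictMono fun e => hasseVal ν e g r := fun _ _ h =>
  WithTop.add_lt_add_left hd (WithTop.coe_lt_coe.2 (nsmul_right_strictMono hr h))

theorem isLastHasseMin_one : IsLastHasseMin ν e (1 : R[X]) 0 0 := by
  have hpos : ∀ t, 0 < t → hasseVal ν e (1 : R[X]) t = ⊤ := fun t ht => by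
    rw [hasseVal, ← C_1, hasseDeriv_C t 1 ht, ν.map_zero, top_add]
  refine ⟨fun t => ?_, by simp, fun t ht => by simp [hpos t ht]⟩
  rcases Nat.eq_zero_or_pos t with rfl | ht
  · simp
  · simp [hpos t ht]

theorem IsLastHasseMin.ne_top {g : R[X]} {m : WithTop Γ} {r : ℕ}
    (hg : IsLastHasseMin ν e g m r) : m ≠ ⊤ :=
  (hg.lt (r + 1) r.lt_succ_self).ne_top

/-- Gauss' lemma for the graded valuation: in `∂_{r+r'}(g h) = ∑ ∂_u g ∂_v h` the term
`(u, v) = (r, r')` is strictly dominant. -/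
theorem IsLastHasseMin.mul {g h : R[X]} {m m' : WithTop Γ} {r r' : ℕ}
    (hg : IsLastHasseMin ν e g m r) (hh : IsLastHasseMin ν e h m' r') :
    IsLastHasseMin ν e (g * h) (m + m') (r + r') := by
  have hle : ∀ u v, m + m' ≤ hasseVal ν e g u + hasseVal ν e h v :=
    fun u v => add_le_add (hg.le u) (hh.le v)
  have hlt : ∀ u v, r < u ∨ r' < v → m + m' < hasseVal ν e g u + hasseVal ν e h v := by
    rintro u v (hu | hv)
    · exact WithTop.add_lt_add_of_lt_of_le hh.ne_top (hg.lt u hu) (hh.le v)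
    · rw [add_comm m, add_comm (hasseVal ν e g u)]
      exact WithTop.add_lt_add_of_lt_of_le hg.ne_top (hh.lt v hv) (hg.le u)
  refine ⟨fun s => ?_, ?_, fun s hs => ?_⟩
  · rw [hasseVal_mul]
    refine ν.le_map_sum_add fun p hp => ?_
    rw [map_hasseDeriv_mul_add hp]
    exact hle p.1 p.2
  · have hrr : (r, r') ∈ antidiagonal (r + r') := mem_antidiagonal.2 rfl
    rw [hasseVal_mul, ν.map_sum_eq_of_forall_lt hrr, map_hasseDeriv_mul_add hrr, hg.eq, hh.eq]
    intro p hp hne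
    rw [← WithTop.add_lt_add_iff_right WithTop.coe_ne_top, map_hasseDeriv_mul_add hrr,
      map_hasseDeriv_mul_add hp, hg.eq, hh.eq]
    refine hlt _ _ ?_
    have := mem_antidiagonal.1 hp
    rcases p with ⟨u, v⟩
    simp only [ne_eq, Prod.mk.injEq] at hne this
    omega
  · rw [hasseVal_mul]
    refine ν.lt_map_sum_add ⟨(0, s), mem_antidiagonal.2 (zero_add s)⟩ fun p hp => ?_
    rw [map_hasseDeriv_mul_add hp]
    exact hlt _ _ (by have := mem_antidiagonal.1 hp; omega)

theorem IsLastHasseMin.pow {g : R[X]} {m : WithTop Γ} {r : ℕ} (hg : IsLastHasseMin ν e g m r)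
    (n : ℕ) : IsLastHasseMin ν e (g ^ n) (n • m) (n * r) := by
  induction n with
  | zero => simpa using isLastHasseMin_one
  | succ n ih => simpa [pow_succ, succ_nsmul, Nat.succ_mul] using ih.mul hg

/-- No cancellation can occur at the largest last index among the terms attaining the minimum. -/
theorem IsLastHasseMin.sum {ι : Type*} {s : Finset ι} (hs : s.Nonempty) {g : ι → R[X]}
    {m : ι → WithTop Γ} {r : ι → ℕ} (hr : Set.InjOn r s)
    (hg : ∀ i ∈ s, IsLastHasseMin ν e (g i) (m i) (r i)) :
    ∃ r₀, IsLastHasseMin ν e (∑ i ∈ s, g i) (s.inf m) r₀ := by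
  classical
  obtain ⟨j, hjs, hjm⟩ := s.exists_mem_eq_inf hs m
  obtain ⟨k, hkM, hkmax⟩ := (s.filter fun i => m i = s.inf m).exists_max_image r
    ⟨j, Finset.mem_filter.2 ⟨hjs, hjm.symm⟩⟩
  obtain ⟨hks, hkm⟩ := Finset.mem_filter.1 hkM
  have hlt : ∀ i ∈ s, ∀ t, (m i = s.inf m → r i < t) →
      s.inf m < hasseVal ν e (g i) t := by
    intro i hi t ht
    by_cases him : m i = s.inf m
    · exact him ▸ (hg i hi).lt t (ht him)
    · exact (lt_of_le_of_ne (s.inf_le hi) (Ne.symm him)).trans_le ((hg i hi).le t)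
  refine ⟨r k, fun t => ?_, ?_, fun t ht => ?_⟩
  · rw [hasseVal_sum]
    exact ν.le_map_sum_add fun i hi => (s.inf_le hi).trans ((hg i hi).le t)
  · rw [hasseVal_sum, ν.map_sum_eq_of_forall_lt hks]
    · exact (hg k hks).eq.trans hkm
    intro i hi hik
    rw [← WithTop.add_lt_add_iff_right WithTop.coe_ne_top]
    refine ((hg k hks).eq.trans hkm).symm ▸ hlt i hi (r k) fun him => ?_
    exact lt_of_le_of_ne (hkmax i (Finset.mem_filter.2 ⟨hi, him⟩)) fun h => hik (hr hi hks h)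
  · rw [hasseVal_sum]
    exact ν.lt_map_sum_add hs fun i hi =>
      hlt i hi t fun him => (hkmax i (Finset.mem_filter.2 ⟨hi, him⟩)).trans_lt ht

theorem exists_isLastHasseMin_of_le {g : R[X]} {m : WithTop Γ} {t₀ : ℕ}
    (hle : ∀ t, m ≤ hasseVal ν e g t) (ht₀ : hasseVal ν e g t₀ = m) (hm : m ≠ ⊤) :
    ∃ r, t₀ ≤ r ∧ IsLastHasseMin ν e g m r := by
  classical
  have hdeg : ∀ {t}, hasseVal ν e g t = m → t ≤ g.natDegree := fun {t} ht =>
    not_lt.1 fun hlt => hm (ht ▸ hasseVal_of_natDegree_lt hlt)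
  refine ⟨Nat.findGreatest (fun t => hasseVal ν e g t = m) g.natDegree,
    Nat.le_findGreatest (hdeg ht₀) ht₀, hle,
    Nat.findGreatest_spec (P := fun t => hasseVal ν e g t = m) (hdeg ht₀) ht₀,
    fun t ht => ?_⟩
  refine lt_of_le_of_ne (hle t) fun h => ?_
  exact Nat.findGreatest_is_greatest ht (hdeg h.symm) h.symm

end HasseValue

section KeyPolynomial

variable {K : Type*} [Field K] {Γ : Type*} [AddCommGroup Γ] [LinearOrder Γ]
  [IsOrderedAddMonoid Γ] {ν : AddValuation K[X] (WithTop Γ)} {f Q : K[X]}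

theorem coe_aval (hν : TrivialSupport ν) (hf : f ≠ 0) :
    ((aval ν f : Γ) : WithTop Γ) = ν f := by
  obtain ⟨γ, hγ⟩ := WithTop.ne_top_iff_exists.1 fun h => hf (hν f h)
  rw [aval, ← hγ]
  rfl

variable [Module ℚ Γ]

noncomputable def hasseSlope (ν : AddValuation K[X] (WithTop Γ)) (f : K[X]) (r : ℕ) : Γ :=
  (r : ℚ)⁻¹ • (aval ν f - aval ν (hasseDeriv r f))

theorem mem_epsSupport {r : ℕ} :
    r ∈ epsSupport f ↔ (1 ≤ r ∧ r ≤ f.natDegree) ∧ hasseDeriv r f ≠ 0 := by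
  rw [epsSupport, @Finset.mem_filter _ _ (Classical.decPred _), Finset.mem_Icc]

theorem mem_epsSupport_of_hasseDeriv_ne_zero {r : ℕ} (hr : r ≠ 0) (hd : hasseDeriv r f ≠ 0) :
    r ∈ epsSupport f :=
  mem_epsSupport.2 ⟨⟨Nat.one_le_iff_ne_zero.2 hr,
    not_lt.1 fun h => hd (hasseDeriv_eq_zero_of_lt_natDegree f r h)⟩, hd⟩

theorem epsSupport_nonempty (hf : 0 < f.natDegree) : (epsSupport f).Nonempty := by
  refine ⟨_, mem_epsSupport_of_hasseDeriv_ne_zero hf.ne' fun h => ?_⟩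
  have h0 := congrArg (coeff · 0) h
  simp only [hasseDeriv_coeff, zero_add, Nat.choose_self, Nat.cast_one, one_mul,
    coeff_zero] at h0
  exact leadingCoeff_ne_zero.2 (ne_zero_of_natDegree_gt hf) h0

theorem eps_eq_sup' (hf : (epsSupport f).Nonempty) :
    eps ν f = (epsSupport f).sup' hf (hasseSlope ν f) :=
  dif_pos hf

theorem hasseVal_hasseSlope (hν : TrivialSupport ν) (hf : f ≠ 0) {r : ℕ} (hr : r ≠ 0)
    (hd : hasseDeriv r f ≠ 0) : hasseVal ν (hasseSlope ν f r) f r = ν f := by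
  have hsmul : r • hasseSlope ν f r = aval ν f - aval ν (hasseDeriv r f) := by
    rw [hasseSlope, ← Nat.cast_smul_eq_nsmul ℚ, smul_smul,
      mul_inv_cancel₀ (Nat.cast_ne_zero.2 hr), one_smul]
  rw [hasseVal, hsmul, ← coe_aval hν hd, ← WithTop.coe_add, add_sub_cancel, coe_aval hν hf]

theorem eps_le_iff (hν : TrivialSupport ν) (hf : 0 < f.natDegree) {e : Γ} :
    eps ν f ≤ e ↔ ∀ t, ν f ≤ hasseVal ν e f t := by
  have hf0 := ne_zero_of_natDegree_gt hf
  have hslope : ∀ {t}, t ≠ 0 → hasseDeriv t f ≠ 0 →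
      (hasseSlope ν f t ≤ e ↔ ν f ≤ hasseVal ν e f t) := fun ht hd => by
    rw [← hasseVal_hasseSlope hν hf0 ht hd]
    exact (hasseVal_strictMono ht fun h => hd (hν _ h)).le_iff_le.symm
  rw [eps_eq_sup' (epsSupport_nonempty hf), Finset.sup'_le_iff]
  refine ⟨fun h t => ?_, fun h t ht => ?_⟩
  · rcases eq_or_ne t 0 with rfl | ht
    · simp
    by_cases hd : hasseDeriv t f = 0
    · simp [hasseVal, hd]
    exact (hslope ht hd).1 (h t (mem_epsSupport_of_hasseDeriv_ne_zero ht hd))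
  · obtain ⟨⟨ht1, -⟩, hd⟩ := mem_epsSupport.1 ht
    exact (hslope (by omega) hd).2 (h t)

theorem IsKeyPoly.exists_isLastHasseMin (hν : TrivialSupport ν) (hQ : IsKeyPoly ν Q) :
    ∃ b, 0 < b ∧ IsLastHasseMin ν (eps ν Q) Q (ν Q) b := by
  have hQ0 : Q ≠ 0 := hQ.1.ne_zero
  obtain ⟨b, hb, hbeq⟩ :=
    Finset.exists_mem_eq_sup' (epsSupport_nonempty hQ.2.1) (hasseSlope ν Q)
  obtain ⟨⟨hb1, -⟩, hd⟩ := mem_epsSupport.1 hb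
  have hQb : hasseVal ν (eps ν Q) Q b = ν Q := by
    rw [eps_eq_sup' (epsSupport_nonempty hQ.2.1), hbeq, hasseVal_hasseSlope hν hQ0 (by omega) hd]
  obtain ⟨r, hbr, hr⟩ := exists_isLastHasseMin_of_le ((eps_le_iff hν hQ.2.1).1 le_rfl) hQb
    fun h => hQ0 (hν Q h)
  exact ⟨r, by omega, hr⟩

theorem IsKeyPoly.isLastHasseMin_of_natDegree_lt (hν : TrivialSupport ν) (hQ : IsKeyPoly ν Q)
    {a : K[X]} (ha : a ≠ 0) (hdeg : a.natDegree < Q.natDegree) :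
    IsLastHasseMin ν (eps ν Q) a (ν a) 0 := by
  have hlt : ∀ t, 0 < t → ν a < hasseVal ν (eps ν Q) a t := by
    intro t ht
    by_cases hd : hasseDeriv t a = 0
    · rw [hasseVal, hd, ν.map_zero, top_add]
      exact lt_top_iff_ne_top.2 fun h => ha (hν a h)
    have hpos : 0 < a.natDegree :=
      Nat.pos_of_ne_zero fun h0 => hd (hasseDeriv_eq_zero_of_lt_natDegree a t (by omega))
    have heps : eps ν a < eps ν Q := lt_of_not_ge fun h => (hQ.2.2 a hpos h).not_gt hdeg
    calc ν a ≤ hasseVal ν (eps ν a) a t := (eps_le_iff hν hpos).1 le_rfl t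
      _ < hasseVal ν (eps ν Q) a t :=
        hasseVal_strictMono ht.ne' (fun h => hd (hν _ h)) heps
  refine ⟨fun t => ?_, hasseVal_zero_right a, hlt⟩
  rcases Nat.eq_zero_or_pos t with rfl | ht
  · exact (hasseVal_zero_right a).ge
  · exact (hlt t ht).le

theorem IsKeyPoly.exists_isLastHasseMin_trunc (hν : TrivialSupport ν) (hQ : IsKeyPoly ν Q)
    (hf : f ≠ 0) : ∃ r, IsLastHasseMin ν (eps ν Q) f (trunc ν Q f) r := by
  classical
  obtain ⟨b, hb, hQb⟩ := hQ.exists_isLastHasseMin hν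
  set s := (Finset.range (f.natDegree + 1)).filter fun i => qCoeff Q i f ≠ 0
  have hterm : ∀ i ∈ s, IsLastHasseMin ν (eps ν Q) (qCoeff Q i f * Q ^ i)
      (ν (qCoeff Q i f * Q ^ i)) (i * b) := by
    intro i hi
    have hi0 := (Finset.mem_filter.1 hi).2
    have := (hQ.isLastHasseMin_of_natDegree_lt hν hi0
      (natDegree_lt_natDegree hi0 (degree_qCoeff_lt hQ.1 i f))).mul (hQb.pow i)
    rwa [zero_add, ← ν.map_pow, ← ν.map_mul] at this
  have hsum : ∑ i ∈ s, qCoeff Q i f * Q ^ i = f := by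
    rw [Finset.sum_filter_of_ne fun i _ h => left_ne_zero_of_mul h,
      sum_qCoeff_mul_pow hQ.1 hQ.2.1 le_rfl]
  have hinf : s.inf (fun i => ν (qCoeff Q i f * Q ^ i)) = trunc ν Q f := by
    refine le_antisymm (Finset.le_inf fun i hi => ?_) (Finset.inf_mono (Finset.filter_subset _ _))
    by_cases hi0 : qCoeff Q i f = 0
    · rw [hi0, zero_mul, ν.map_zero]
      exact le_top
    · exact Finset.inf_le (Finset.mem_filter.2 ⟨hi, hi0⟩)
  have hs : s.Nonempty := Finset.nonempty_iff_ne_empty.2 fun he => hf (by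
    rw [← hsum, he, Finset.sum_empty])
  obtain ⟨r, hr⟩ :=
    IsLastHasseMin.sum hs (fun i _ j _ h => Nat.eq_of_mul_eq_mul_right hb h) hterm
  rw [hinf, hsum] at hr
  exact ⟨r, hr⟩

theorem IsKeyPoly.trunc_eq_iff_eps_le (hν : TrivialSupport ν) (hQ : IsKeyPoly ν Q)
    (hf : 0 < f.natDegree) : trunc ν Q f = ν f ↔ eps ν f ≤ eps ν Q := by
  obtain ⟨r, hr⟩ := hQ.exists_isLastHasseMin_trunc hν (ne_zero_of_natDegree_gt hf)
  rw [eps_le_iff hν hf]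
  refine ⟨fun h => h ▸ hr.le, fun h => le_antisymm ?_ (hr.eq ▸ h r)⟩
  simpa using hr.le 0

end KeyPolynomial

section Transcendence

variable {K : Type*} [Field K] {Γ : Type*} [AddCommGroup Γ] [LinearOrder Γ]
  [IsOrderedAddMonoid Γ] {ν : AddValuation K[X] (WithTop Γ)}
  {w : AddValuation (RatFunc K) (WithTop Γ)} {Q : K[X]}

theorem map_eval₂_le_of_forall_eq_trunc (hQ : Q.Monic) (hQd : 0 < Q.natDegree)
    (htr : ∀ p, ν p = trunc ν Q p) (D : K[X]) (k : ℕ) :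
    ν (D.eval₂ C Q) ≤ ν (C (D.coeff k) * Q ^ k) := by
  have hE : ∀ j, ((D.map C).coeff j).degree < Q.degree := fun j => by
    rw [coeff_map]
    exact degree_C_le.trans_lt (natDegree_pos_iff_degree_pos.1 hQd)
  have := trunc_le_map_qCoeff_mul_pow ν hQ hQd ((D.map C).eval Q) k
  rwa [qCoeff_eval hQ hE, coeff_map, eval_map, ← htr] at this

theorem algebraMap_C_eq (c : K) :
    algebraMap K[X] (RatFunc K) (C c) = algebraMap K (RatFunc K) c := by
  rw [RatFunc.algebraMap_C, RatFunc.algebraMap_eq_C]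

theorem isValueTranscendental_of_forall_ne (hw : ExtendsToRatFunc w ν) (hQ : Q ≠ 0)
    (h : ∀ n, 0 < n → ∀ c : K, c ≠ 0 → ν (Q ^ n) ≠ ν (C c)) :
    IsValueTranscendental w :=
  ⟨algebraMap K[X] (RatFunc K) Q, RatFunc.algebraMap_ne_zero hQ, fun n hn c hc => by
    rw [← map_pow, hw, ← algebraMap_C_eq, hw]
    exact h n hn c hc⟩

/-- Clearing denominators in `∑ cᵢ gⁱ`, `g = Qⁿ / c`, gives the `Q`-expansion
`∑ cᵢ c^(m-i) Q^(n i)`; since `ν = ν_Q`, its value is at most that of a term with `ν(cᵢ) = 0`,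
namely `m ν(c)`. -/
theorem isResidueTranscendental_of_forall_eq_trunc (hw : ExtendsToRatFunc w ν) (hQ : Q.Monic)
    (hQd : 0 < Q.natDegree) (htr : ∀ p, ν p = trunc ν Q p) {n : ℕ} (hn : 0 < n) {c : K}
    (hc : c ≠ 0) (hQc : ν (Q ^ n) = ν (C c)) : IsResidueTranscendental w := by
  set cK := algebraMap K (RatFunc K) c
  set g := algebraMap K[X] (RatFunc K) Q ^ n / cK
  have hcK : cK ≠ 0 := (_root_.map_ne_zero _).2 hc
  have hwc : w cK = ν (C c) := by rw [← hw, algebraMap_C_eq]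
  have hQg : algebraMap K[X] (RatFunc K) Q ^ n = cK * g := (mul_div_cancel₀ _ hcK).symm
  have hwg : w g = 0 := by
    have h := congrArg w hQg
    rw [w.map_mul, ← map_pow, hw, hQc, ← hwc] at h
    exact WithTop.add_left_cancel (fun h => hcK (w.top_iff.1 h)) (h.symm.trans (add_zero _).symm)
  refine ⟨g, hwg, fun m cf hcf ⟨i₀, hi₀, hcf₀⟩ => le_antisymm ?_ ?_⟩
  · set D : K[X] := ∑ i ∈ Finset.range (m + 1), monomial (n * i) (cf i * c ^ (m - i))
    have hDS : algebraMap K[X] (RatFunc K) (D.eval₂ C Q) =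
        cK ^ m * ∑ i ∈ Finset.range (m + 1), algebraMap K (RatFunc K) (cf i) * g ^ i := by
      rw [eval₂_finsetSum, map_sum, Finset.mul_sum]
      refine Finset.sum_congr rfl fun i hi => ?_
      have hcm : cK ^ m = cK ^ (m - i) * cK ^ i := by
        rw [← pow_add, Nat.sub_add_cancel (Nat.lt_succ_iff.1 (Finset.mem_range.1 hi))]
      rw [eval₂_monomial, map_mul, map_pow, algebraMap_C_eq, map_mul, map_pow, pow_mul, hQg,
        hcm]
      ring
    have hDk : D.coeff (n * i₀) = cf i₀ * c ^ (m - i₀) := by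
      simp [D, finsetSum_coeff, coeff_monomial, Nat.mul_left_cancel_iff hn, hi₀]
    have hcf₀' : ν (C (cf i₀)) = 0 := by rw [← hw, algebraMap_C_eq]; exact hcf₀
    have hle := map_eval₂_le_of_forall_eq_trunc hQ hQd htr D (n * i₀)
    rw [hDk, C_mul, C_pow, ν.map_mul, ν.map_mul, ν.map_pow, pow_mul, ν.map_pow, hQc, hcf₀',
      zero_add, ← add_nsmul, Nat.sub_add_cancel hi₀, ← hwc, ← w.map_pow, ← hw, hDS,
      w.map_mul] at hle
    have hctop : w (cK ^ m) ≠ ⊤ := fun h => pow_ne_zero m hcK (w.top_iff.1 h)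
    exact (WithTop.add_le_add_iff_left hctop).1 (hle.trans (add_zero _).ge)
  · refine w.map_le_sum fun i hi => ?_
    rw [w.map_mul, w.map_pow, hwg, smul_zero, add_zero]
    exact hcf i (Nat.lt_succ_iff.1 (Finset.mem_range.1 hi))

theorem isValuationTranscendental_of_forall_eq_trunc (hw : ExtendsToRatFunc w ν) (hQ : Q.Monic)
    (hQd : 0 < Q.natDegree) (htr : ∀ p, ν p = trunc ν Q p) : IsValuationTranscendental w := by
  by_cases h : ∃ n, 0 < n ∧ ∃ c : K, c ≠ 0 ∧ ν (Q ^ n) = ν (C c)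
  · obtain ⟨n, hn, c, hc, hQc⟩ := h
    exact Or.inr (isResidueTranscendental_of_forall_eq_trunc hw hQ hQd htr hn hc hQc)
  · push Not at h
    exact Or.inl (isValueTranscendental_of_forall_ne hw hQ.ne_zero h)

end Transcendence

theorem trunc_eq_of_complete_with_last_element_general {K : Type*} [Field K] {Γ : Type*}
    [AddCommGroup Γ] [LinearOrder Γ] [IsOrderedAddMonoid Γ] [Module ℚ Γ]
    (ν : AddValuation (Polynomial K) (WithTop Γ)) (w : AddValuation (RatFunc K) (WithTop Γ))
    (hν : TrivialSupport ν) (hw : ExtendsToRatFunc w ν)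
    (Λ : Set (Polynomial K))
    (hkey : ∀ Q ∈ Λ, IsKeyPoly ν Q)
    (hcompl : ∀ f : Polynomial K, ∃ Q ∈ Λ, trunc ν Q f = ν f)
    (Q : Polynomial K) (hQΛ : Q ∈ Λ) (hlast : ∀ Q' ∈ Λ, eps ν Q' ≤ eps ν Q) :
    (∀ p : Polynomial K, ν p = trunc ν Q p) ∧ IsValuationTranscendental w := by
  have hQ := hkey Q hQΛ
  have htr : ∀ p, ν p = trunc ν Q p := by
    intro p
    rcases Nat.eq_zero_or_pos p.natDegree with hp | hp
    · exact (trunc_of_degree_lt ν hQ.1 (degree_lt_degree (hp ▸ hQ.2.1))).symm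
    obtain ⟨Q', hQ'Λ, hQ'p⟩ := hcompl p
    have hpQ' := ((hkey Q' hQ'Λ).trunc_eq_iff_eps_le hν hp).1 hQ'p
    exact ((hQ.trunc_eq_iff_eps_le hν hp).2 (hpQ'.trans (hlast Q' hQ'Λ))).symm
  exact ⟨htr, isValuationTranscendental_of_forall_eq_trunc hw hQ.1 hQ.2.1 htr⟩

/-- If `Λ` is a complete sequence of key polynomials for `ν` having a last
element `Q`, then `ν = ν_Q` and consequently `ν` is valuation-transcendental. -/
theorem trunc_eq_of_complete_with_last_element {K : Type*} [Field K] {Γ : Type*}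
    [AddCommGroup Γ] [LinearOrder Γ] [IsOrderedAddMonoid Γ] [Module ℚ Γ] [OrderedSMul ℚ Γ]
    (ν : AddValuation (Polynomial K) (WithTop Γ)) (w : AddValuation (RatFunc K) (WithTop Γ))
    (hν : TrivialSupport ν) (hw : ExtendsToRatFunc w ν)
    (Λ : Set (Polynomial K))
    (hkey : ∀ Q ∈ Λ, IsKeyPoly ν Q)
    (hdist : ∀ Q ∈ Λ, ∀ Q' ∈ Λ, eps ν Q = eps ν Q' → Q = Q')
    (hwo : Λ.WellFoundedOn fun Q Q' => eps ν Q < eps ν Q')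
    (hcompl : ∀ f : Polynomial K, ∃ Q ∈ Λ, trunc ν Q f = ν f)
    (Q : Polynomial K) (hQΛ : Q ∈ Λ) (hlast : ∀ Q' ∈ Λ, eps ν Q' ≤ eps ν Q) :
    (∀ p : Polynomial K, ν p = trunc ν Q p) ∧ IsValuationTranscendental w :=
  trunc_eq_of_complete_with_last_element_general ν w hν hw Λ hkey hcompl Q hQΛ hlast
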